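/- Let 2 < p ≤ ∞ and let F ∈ L^p([−π, π]). For f(z) = (1/2π) ∫_{−π}^{π} F(t) e^{−izt} dt one has, with 1/p + 1/q = 1, the bound |f(x + iy)| ≤ (1/2π) ‖F‖_{L^p([−π,π])} ((e^{πqy} − e^{−πqy})/(qy))^{1/q} for all x ∈ ℝ and y ≠ 0, and consequently lim_{|y| → ∞} sup_{x ∈ ℝ} |f(x + iy)| / √((e^{2πy} − e^{−2πy})/(4πy)) = 0. -/

import Mathlib

open MeasureTheory

/-- The Paley–Wiener transform `f(z) = (1/2π) ∫_{−π}^{π} F(t) e^{−izt} dt`. -/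
noncomputable def pwTransform (F : ℝ → ℂ) (z : ℂ) : ℂ :=
  (1 / (2 * Real.pi) : ℝ) •
    ∫ t in Set.Icc (-Real.pi) Real.pi, F t * Complex.exp (-Complex.I * z * t)

/-- The diagonal of the Paley–Wiener reproducing kernel:
`K(z, z̄) = (e^{2πy} − e^{−2πy})/(4πy)` for `z = x + iy`, interpreted as `1` when `y = 0`. -/
noncomputable def pwKernelDiag (y : ℝ) : ℝ :=
  if y = 0 then 1
  else (Real.exp (2 * Real.pi * y) - Real.exp (-(2 * Real.pi * y))) / (4 * Real.pi * y)

/-!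
By Hölder's inequality, `|f(x+iy)| ≤ (1/2π) ‖F‖_p ‖e^{-izt}‖_q`, and `|e^{-izt}| = e^{yt}`, so
`‖e^{-izt}‖_q^q = ∫_{-π}^{π} e^{qyt} dt = (e^{πqy} − e^{−πqy})/(qy)`. For large `|y|` this gives
`sup_x |f(x+iy)| ≲ e^{π|y|} |y|^{-1/q}`, while `√K(z, z̄) ≳ e^{π|y|} |y|^{-1/2}`; the quotient is
`O(|y|^{1/2 - 1/q})`, which tends to `0` because `q < 2`.
-/

open Real Filter Topology
open scoped ENNReal Complex

lemma ENNReal.holderConjugate_ofReal_of_one_div_toReal_add {p : ℝ≥0∞} (hp : 1 < p) {q : ℝ}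
    (hq : 1 / p.toReal + 1 / q = 1) : p.HolderConjugate (ENNReal.ofReal q) := by
  rcases eq_or_ne p ⊤ with rfl | hp_top
  · obtain rfl : q = 1 := by simpa using hq
    simpa using (inferInstance : ENNReal.HolderConjugate ⊤ 1)
  · have hp' : 1 < p.toReal := by
      simpa using (ENNReal.toReal_lt_toReal ENNReal.one_ne_top hp_top).mpr hp
    have h : p.toReal.HolderConjugate q :=
      Real.holderConjugate_iff.mpr ⟨hp', by simpa [one_div] using hq⟩
    simpa [ENNReal.ofReal_toReal hp_top] using h.ennrealOfReal

lemma one_half_lt_one_div_of_two_lt {p : ℝ≥0∞} (hp : 2 < p) {q : ℝ}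
    (hq : 1 / p.toReal + 1 / q = 1) : 1 / 2 < 1 / q := by
  suffices 1 / p.toReal < 1 / 2 by linarith
  rcases eq_or_ne p ⊤ with rfl | hp_top
  · norm_num
  · have hp' : 2 < p.toReal := by
      simpa using (ENNReal.toReal_lt_toReal (by norm_num) hp_top).mpr hp
    exact one_div_lt_one_div_of_lt two_pos hp'

namespace MeasureTheory

theorem norm_integral_mul_le_of_memLp {α 𝕜 : Type*} [MeasurableSpace α] {μ : Measure α}
    [NormedRing 𝕜] [NormedSpace ℝ 𝕜] {p q : ℝ≥0∞} [p.HolderConjugate q] {f g : α → 𝕜}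
    (hf : MemLp f p μ) (hg : MemLp g q μ) :
    ‖∫ a, f a * g a ∂μ‖ ≤ (eLpNorm f p μ).toReal * (eLpNorm g q μ).toReal := by
  rw [← ENNReal.toReal_mul, ← toReal_enorm]
  refine ENNReal.toReal_mono (ENNReal.mul_ne_top hf.eLpNorm_ne_top hg.eLpNorm_ne_top) ?_
  calc ‖∫ a, f a * g a ∂μ‖ₑ ≤ ∫⁻ a, ‖f a * g a‖ₑ ∂μ := enorm_integral_le_lintegral_enorm _
    _ = eLpNorm (fun a => f a * g a) 1 μ := eLpNorm_one_eq_lintegral_enorm.symm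
    _ ≤ eLpNorm f p μ * eLpNorm g q μ := by
      simpa using eLpNorm_le_eLpNorm_mul_eLpNorm_of_nnnorm hf.1 hg.1 (· * ·) 1
        (.of_forall fun a => by simpa using nnnorm_mul_le (f a) (g a))

end MeasureTheory

theorem integral_exp_mul {a b c : ℝ} (hc : c ≠ 0) :
    ∫ t in a..b, rexp (c * t) = (rexp (c * b) - rexp (c * a)) / c := by
  rw [intervalIntegral.integral_comp_mul_left (fun t => rexp t) hc, integral_exp, smul_eq_mul,
    inv_mul_eq_div]

/-- The closed form of `∫_{-π}^{π} e^{ct} dt`: both `‖e^{-izt}‖_q^q` and `2π K(z, z̄)` are values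
of it. -/
noncomputable def expIntegralPi (c : ℝ) : ℝ := (rexp (π * c) - rexp (-(π * c))) / c

lemma integral_exp_mul_Icc_eq_expIntegralPi {c : ℝ} (hc : c ≠ 0) :
    ∫ t in Set.Icc (-π) π, rexp (c * t) = expIntegralPi c := by
  rw [integral_Icc_eq_integral_Ioc, ← intervalIntegral.integral_of_le (by linarith [pi_pos]),
    integral_exp_mul hc, expIntegralPi, mul_comm c, mul_neg, mul_comm c]

lemma expIntegralPi_neg (c : ℝ) : expIntegralPi (-c) = expIntegralPi c := by
  rw [expIntegralPi, expIntegralPi, mul_neg, neg_neg, ← neg_sub, neg_div_neg_eq]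

lemma expIntegralPi_pos {c : ℝ} (hc : 0 < c) : 0 < expIntegralPi c :=
  div_pos (sub_pos.mpr (exp_lt_exp.mpr (by nlinarith [pi_pos]))) hc

lemma expIntegralPi_le {c : ℝ} (hc : 0 < c) : expIntegralPi c ≤ rexp (π * c) / c :=
  div_le_div_of_nonneg_right (sub_le_self _ (exp_pos _).le) hc.le

lemma exp_div_two_le_expIntegralPi {c : ℝ} (hc : 1 ≤ c) :
    rexp (π * c) / (2 * c) ≤ expIntegralPi c := by
  have h2 : 2 ≤ rexp (π * c) * rexp (π * c) := by
    rw [← exp_add]; nlinarith [add_one_le_exp (π * c + π * c), pi_gt_three]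
  have hinv : rexp (-(π * c)) * rexp (π * c) = 1 := by rw [← exp_add]; simp
  rw [expIntegralPi, div_le_div_iff₀ (by positivity) (by positivity)]
  nlinarith [exp_pos (π * c), exp_pos (-(π * c))]

lemma pwKernelDiag_of_ne_zero {y : ℝ} (hy : y ≠ 0) :
    pwKernelDiag y = expIntegralPi (2 * y) / (2 * π) := by
  rw [pwKernelDiag, if_neg hy, expIntegralPi, div_div]
  ring_nf

lemma norm_cexp_neg_I_mul (z : ℂ) (t : ℝ) : ‖cexp (-Complex.I * z * t)‖ = rexp (z.im * t) := by
  simp [Complex.norm_exp, Complex.mul_re, Complex.mul_im]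

lemma memLp_cexp_neg_I_mul (z : ℂ) (q : ℝ≥0∞) :
    MemLp (fun t : ℝ => cexp (-Complex.I * z * t)) q (volume.restrict (Set.Icc (-π) π)) := by
  refine .of_bound (by fun_prop) (rexp (|z.im| * π))
    (ae_restrict_of_forall_mem measurableSet_Icc fun t ht => ?_)
  rw [norm_cexp_neg_I_mul, exp_le_exp]
  calc z.im * t ≤ |z.im| * |t| := (le_abs_self _).trans (abs_mul _ _).le
    _ ≤ |z.im| * π := by gcongr; exact abs_le.mpr ht

lemma toReal_eLpNorm_cexp_neg_I_mul {q : ℝ} (hq : 0 < q) {z : ℂ} (hz : z.im ≠ 0) :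
    (eLpNorm (fun t : ℝ => cexp (-Complex.I * z * t)) (ENNReal.ofReal q)
      (volume.restrict (Set.Icc (-π) π))).toReal = expIntegralPi (q * z.im) ^ (1 / q) := by
  have hmeas := (memLp_cexp_neg_I_mul z (ENNReal.ofReal q)).1
  rw [toReal_eLpNorm hmeas, lpNorm_eq_integral_norm_rpow_toReal (by simpa using hq)
    ENNReal.ofReal_ne_top hmeas, ENNReal.toReal_ofReal hq.le, one_div,
    ← integral_exp_mul_Icc_eq_expIntegralPi (mul_ne_zero hq.ne' hz)]
  simp_rw [norm_cexp_neg_I_mul, ← exp_mul]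
  congr 2 with t
  ring_nf

theorem norm_pwTransform_le {p : ℝ≥0∞} {q : ℝ} [p.HolderConjugate (ENNReal.ofReal q)]
    (hq : 0 < q) {F : ℝ → ℂ} (hF : MemLp F p (volume.restrict (Set.Icc (-π) π))) {z : ℂ}
    (hz : z.im ≠ 0) :
    ‖pwTransform F z‖ ≤ 1 / (2 * π) * (eLpNorm F p (volume.restrict (Set.Icc (-π) π))).toReal *
      expIntegralPi (q * z.im) ^ (1 / q) := by
  rw [pwTransform, norm_smul, norm_of_nonneg (by positivity), mul_assoc,
    ← toReal_eLpNorm_cexp_neg_I_mul hq hz]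
  gcongr
  exact norm_integral_mul_le_of_memLp hF (memLp_cexp_neg_I_mul z _)

lemma expIntegralPi_mul_rpow_le {q y : ℝ} (hq : 0 < q) (hy : 0 < y) :
    expIntegralPi (q * y) ^ (1 / q) ≤ rexp (π * y) / (q * y) ^ (1 / q) := by
  have hqy : 0 < q * y := mul_pos hq hy
  calc expIntegralPi (q * y) ^ (1 / q) ≤ (rexp (π * (q * y)) / (q * y)) ^ (1 / q) :=
        rpow_le_rpow (expIntegralPi_pos hqy).le (expIntegralPi_le hqy) (by positivity)
    _ = rexp (π * y) / (q * y) ^ (1 / q) := by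
        rw [div_rpow (exp_pos _).le hqy.le, ← exp_mul]
        congr 2
        field_simp

lemma exp_div_sqrt_le_sqrt_expIntegralPi {y : ℝ} (hy : 1 / 2 ≤ y) :
    rexp (π * y) / √(8 * π * y) ≤ √(expIntegralPi (2 * y) / (2 * π)) := by
  have hy0 : 0 < y := by linarith
  rw [le_sqrt' (by positivity), div_pow, sq_sqrt (by positivity), sq, ← exp_add]
  calc rexp (π * y + π * y) / (8 * π * y) = rexp (π * (2 * y)) / (2 * (2 * y)) / (2 * π) := by
        ring_nf
    _ ≤ expIntegralPi (2 * y) / (2 * π) := by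
        gcongr
        exact exp_div_two_le_expIntegralPi (by linarith)

lemma tendsto_sqrt_mul_div_rpow_mul_atTop (a : ℝ) {b s : ℝ} (hb : 0 < b) (hs : 1 / 2 < s) :
    Tendsto (fun y => √(a * y) / (b * y) ^ s) atTop (𝓝 0) := by
  have h := (tendsto_rpow_neg_atTop (by linarith : 0 < s - 1 / 2)).const_mul (√a / b ^ s)
  rw [mul_zero] at h
  refine h.congr' ((eventually_gt_atTop 0).mono fun y hy => ?_)
  dsimp only
  rw [sqrt_mul' a hy.le, mul_rpow hb.le hy.le, sqrt_eq_rpow y, rpow_neg hy.le, rpow_sub hy]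
  field_simp

lemma Filter.Tendsto.comap_abs_atTop_of_even {α : Type*} {f : ℝ → α} {l : Filter α}
    (hf : ∀ y, f (-y) = f y) (h : Tendsto f atTop l) :
    Tendsto f (comap (fun y => |y|) atTop) l := by
  have hf_abs : f = f ∘ abs := funext fun y => by rcases abs_choice y with h | h <;> simp [h, hf]
  rw [hf_abs]
  exact h.comp tendsto_comap

lemma tendsto_expIntegralPi_rpow_div_sqrt_atTop {q : ℝ} (hq : 0 < q) (hq2 : 1 / 2 < 1 / q) :
    Tendsto (fun y => expIntegralPi (q * y) ^ (1 / q) / √(expIntegralPi (2 * y) / (2 * π)))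
      atTop (𝓝 0) := by
  refine squeeze_zero' ((eventually_gt_atTop 0).mono fun y hy => ?_)
    ((eventually_ge_atTop 1).mono fun y hy => ?_)
    (tendsto_sqrt_mul_div_rpow_mul_atTop (8 * π) hq hq2)
  · exact div_nonneg (rpow_nonneg (expIntegralPi_pos (mul_pos hq hy)).le _) (sqrt_nonneg _)
  · have hy0 : 0 < y := by linarith
    calc expIntegralPi (q * y) ^ (1 / q) / √(expIntegralPi (2 * y) / (2 * π))
        ≤ (rexp (π * y) / (q * y) ^ (1 / q)) / (rexp (π * y) / √(8 * π * y)) :=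
          div_le_div₀ (by positivity) (expIntegralPi_mul_rpow_le hq hy0) (by positivity)
            (exp_div_sqrt_le_sqrt_expIntegralPi (by linarith))
      _ = √(8 * π * y) / (q * y) ^ (1 / q) := div_div_div_cancel_left' _ _ (exp_pos _).ne'

theorem stmt14 (p : ENNReal) (hp : 2 < p) (F : ℝ → ℂ)
    (hF : MemLp F p (volume.restrict (Set.Icc (-Real.pi) Real.pi)))
    (q : ℝ) (hq : 1 / p.toReal + 1 / q = 1) :
    (∀ (x y : ℝ), y ≠ 0 →
      ‖pwTransform F (x + y * Complex.I)‖ ≤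
        (1 / (2 * Real.pi)) *
          (eLpNorm F p (volume.restrict (Set.Icc (-Real.pi) Real.pi))).toReal *
            ((Real.exp (Real.pi * q * y) - Real.exp (-(Real.pi * q * y))) / (q * y)) ^
              (1 / q)) ∧
    Filter.Tendsto
      (fun y : ℝ =>
        (⨆ x : ℝ, ‖pwTransform F (x + y * Complex.I)‖) /
          Real.sqrt (pwKernelDiag y))
      (Filter.comap (fun y : ℝ => |y|) Filter.atTop) (nhds 0) := by
  have hq2 := one_half_lt_one_div_of_two_lt hp hq
  have hq0 : 0 < q := one_div_pos.mp (by linarith)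
  have := ENNReal.holderConjugate_ofReal_of_one_div_toReal_add (ENNReal.one_lt_two.trans hp) hq
  set C := 1 / (2 * π) * (eLpNorm F p (volume.restrict (Set.Icc (-π) π))).toReal
  have hbound (x y : ℝ) (hy : y ≠ 0) :
      ‖pwTransform F (x + y * Complex.I)‖ ≤ C * expIntegralPi (q * y) ^ (1 / q) := by
    have him : ((x : ℂ) + y * Complex.I).im = y := by simp
    simpa only [him] using norm_pwTransform_le (z := x + y * Complex.I) hq0 hF (by rwa [him])
  refine ⟨fun x y hy => by simpa [expIntegralPi, mul_assoc] using hbound x y hy, ?_⟩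
  have hlim := ((tendsto_expIntegralPi_rpow_div_sqrt_atTop hq0 hq2).comap_abs_atTop_of_even
    fun y => by simp only [mul_neg, expIntegralPi_neg]).const_mul C
  rw [mul_zero] at hlim
  refine squeeze_zero' (.of_forall fun y => div_nonneg (iSup_nonneg fun x => norm_nonneg _)
    (sqrt_nonneg _)) ?_ hlim
  filter_upwards [tendsto_comap.eventually (eventually_gt_atTop 0)] with y hy
  rw [pwKernelDiag_of_ne_zero (abs_pos.mp hy), ← mul_div_assoc]
  gcongr
  exact ciSup_le fun x => hbound x y (abs_pos.mp hy)
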